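/- Let a1, ..., a6 be real numbers, set a7 = a4 + a5 − a6 and a8 = a1 + a2 + a3 − a4 − a5, and assume a1, ..., a8 are all nonnegative and the eight numbers a1, ..., a8 are pairwise distinct. Then the 9×9 matrix L₃ = a1·λ1⊗λ1 + a2·λ2ᵀ⊗λ2 + a3·λ3⊗λ3 + a4·λ4⊗λ4 + a5·λ5ᵀ⊗λ5 + a6·λ6⊗λ6 + a7·λ7ᵀ⊗λ7 + a8·λ8⊗λ8 − (2/3)(2a1+2a2+2a3+a4+a5)·I₉ has nine pairwise distinct eigenvalues; consequently for every λ ∈ ℂ the kernel of L₃ − λ·I₉ has dimension at most 1 (the index of cyclicity of L₃ equals 1), and the minimal polynomial of L₃ equals its characteristic polynomial. -/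

import Mathlib

/-!
On vectorised `3 × 3` matrices, `L₃` is the superoperator `X ↦ Σₖ aₖ λₖ X λₖ − c X` with
`c = (2/3)(2a1 + 2a2 + 2a3 + a4 + a5)`. It kills the identity and scales each Gell-Mann matrix,
`L₃ λₖ = (2aₖ − (a1 + ⋯ + a8)) λₖ`. Distinct `aₖ` make these eight eigenvalues distinct, and they
are negative: the constraints give `aₖ ≤ a1 + a2 + a3` for every `k` and `a4 + a5 > 0`, while
`a1 + ⋯ + a8 = 2(a1 + a2 + a3) + a4 + a5`. Nine eigenvectors with distinct eigenvalues in
dimension nine determine the characteristic polynomial, make it the minimal polynomial and leave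
room for no eigenspace of dimension two.
-/

open Matrix Complex Kronecker Polynomial

noncomputable section

/-- The Gell-Mann matrices. -/
def gm1 : Matrix (Fin 3) (Fin 3) ℂ := !![0, 1, 0; 1, 0, 0; 0, 0, 0]
def gm2 : Matrix (Fin 3) (Fin 3) ℂ := !![0, -I, 0; I, 0, 0; 0, 0, 0]
def gm3 : Matrix (Fin 3) (Fin 3) ℂ := !![1, 0, 0; 0, -1, 0; 0, 0, 0]
def gm4 : Matrix (Fin 3) (Fin 3) ℂ := !![0, 0, 1; 0, 0, 0; 1, 0, 0]
def gm5 : Matrix (Fin 3) (Fin 3) ℂ := !![0, 0, -I; 0, 0, 0; I, 0, 0]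
def gm6 : Matrix (Fin 3) (Fin 3) ℂ := !![0, 0, 0; 0, 0, 1; 0, 1, 0]
def gm7 : Matrix (Fin 3) (Fin 3) ℂ := !![0, 0, 0; 0, 0, -I; 0, I, 0]
def gm8 : Matrix (Fin 3) (Fin 3) ℂ :=
  ((↑(Real.sqrt 3) : ℂ))⁻¹ • !![1, 0, 0; 0, 1, 0; 0, 0, -2]

/-- The generator of evolution for 3-level systems, with `a7 = a4+a5−a6` and
`a8 = a1+a2+a3−a4−a5` substituted. -/
def gen3 (a1 a2 a3 a4 a5 a6 : ℝ) : Matrix (Fin 3 × Fin 3) (Fin 3 × Fin 3) ℂ :=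
  (a1 : ℂ) • (gm1 ⊗ₖ gm1) + (a2 : ℂ) • (gm2ᵀ ⊗ₖ gm2) + (a3 : ℂ) • (gm3 ⊗ₖ gm3)
    + (a4 : ℂ) • (gm4 ⊗ₖ gm4) + (a5 : ℂ) • (gm5ᵀ ⊗ₖ gm5) + (a6 : ℂ) • (gm6 ⊗ₖ gm6)
    + ((a4 + a5 - a6 : ℝ) : ℂ) • (gm7ᵀ ⊗ₖ gm7)
    + ((a1 + a2 + a3 - a4 - a5 : ℝ) : ℂ) • (gm8 ⊗ₖ gm8)
    - ((2 / 3 * (2 * a1 + 2 * a2 + 2 * a3 + a4 + a5) : ℝ) : ℂ)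
        • (1 : Matrix (Fin 3 × Fin 3) (Fin 3 × Fin 3) ℂ)

section DistinctEigenvalues

variable {K ι κ : Type*} [Field K] [Fintype ι] [DecidableEq ι] [Fintype κ]
  {A : Matrix ι ι K} {d : κ → K} {v : κ → ι → K}

theorem Matrix.hasEigenvector_toLin'_of_mulVec_eq_smul {μ : K} {x : ι → K} (hx : x ≠ 0)
    (hAx : A *ᵥ x = μ • x) : Module.End.HasEigenvector (toLin' A) μ x :=
  Module.End.hasEigenvector_iff.mpr ⟨Module.End.mem_eigenspace_iff.mpr hAx, hx⟩

theorem Matrix.prod_X_sub_C_dvd_of_mulVec_eq_smul {p : K[X]} (hd : Function.Injective d)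
    (hv : ∀ k, v k ≠ 0) (hAv : ∀ k, A *ᵥ v k = d k • v k)
    (hp : ∀ μ, Module.End.HasEigenvalue (toLin' A) μ → p.IsRoot μ) :
    ∏ k, (X - C (d k)) ∣ p :=
  Fintype.prod_dvd_of_coprime (pairwise_coprime_X_sub_C hd) fun k =>
    dvd_iff_isRoot.mpr <| hp _ (Module.End.hasEigenvalue_of_hasEigenvector
      (hasEigenvector_toLin'_of_mulVec_eq_smul (hv k) (hAv k)))

theorem Matrix.charpoly_eq_prod_of_mulVec_eq_smul (hd : Function.Injective d)
    (hv : ∀ k, v k ≠ 0) (hAv : ∀ k, A *ᵥ v k = d k • v k)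
    (hcard : Fintype.card κ = Fintype.card ι) :
    A.charpoly = ∏ k, (X - C (d k)) := by
  refine eq_of_monic_of_dvd_of_natDegree_le (monic_prod_X_sub_C _ _) A.charpoly_monic
    (prod_X_sub_C_dvd_of_mulVec_eq_smul hd hv hAv fun μ hμ => ?_) (by simp [hcard])
  rwa [← charpoly_toLin', ← Module.End.hasEigenvalue_iff_isRoot_charpoly]

theorem Matrix.minpoly_eq_charpoly_of_mulVec_eq_smul (hd : Function.Injective d)
    (hv : ∀ k, v k ≠ 0) (hAv : ∀ k, A *ᵥ v k = d k • v k)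
    (hcard : Fintype.card κ = Fintype.card ι) :
    minpoly K A = A.charpoly := by
  have hdvd : A.charpoly ∣ minpoly K A := by
    rw [charpoly_eq_prod_of_mulVec_eq_smul hd hv hAv hcard]
    refine prod_X_sub_C_dvd_of_mulVec_eq_smul hd hv hAv fun μ hμ => ?_
    rwa [← minpoly_toLin', ← Module.End.hasEigenvalue_iff_isRoot]
  exact (eq_of_monic_of_dvd_of_natDegree_le A.charpoly_monic
    (minpoly.monic (Algebra.IsIntegral.isIntegral A)) hdvd
    (natDegree_le_of_dvd (minpoly_dvd_charpoly A) A.charpoly_monic.ne_zero))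

theorem Matrix.finrank_ker_sub_smul_le_one_of_mulVec_eq_smul (hd : Function.Injective d)
    (hv : ∀ k, v k ≠ 0) (hAv : ∀ k, A *ᵥ v k = d k • v k)
    (hcard : Fintype.card κ = Fintype.card ι) (μ : K) :
    Module.finrank K (LinearMap.ker (A - μ • 1).mulVecLin) ≤ 1 := by
  classical
  -- `A - μ • 1` maps onto every eigenvector whose eigenvalue is not `μ`, i.e. all but at most one.
  have hs : Fintype.card κ ≤ Fintype.card {k // ¬d k = μ} + 1 := by
    have : Fintype.card {k // d k = μ} ≤ 1 := Fintype.card_le_one_iff_subsingleton.mpr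
      ⟨fun a b => Subtype.ext (hd (a.2.trans b.2.symm))⟩
    have := Fintype.card_subtype_compl fun k => d k = μ
    have := Fintype.card_subtype_le fun k => d k = μ
    omega
  have hindep : LinearIndependent K fun k : {k // ¬d k = μ} => v k :=
    (Module.End.eigenvectors_linearIndependent' _ d hd v fun k =>
      hasEigenvector_toLin'_of_mulVec_eq_smul (hv k) (hAv k)).comp _ Subtype.val_injective
  have hspan : Submodule.span K (Set.range fun k : {k // ¬d k = μ} => v k) ≤
      LinearMap.range (A - μ • 1).mulVecLin := by
    rw [Submodule.span_le]
    rintro _ ⟨⟨k, hk⟩, rfl⟩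
    refine ⟨(d k - μ)⁻¹ • v k, ?_⟩
    simp [hAv, ← sub_smul, smul_smul, sub_ne_zero.mpr hk]
  have hrange := (finrank_span_eq_card hindep).symm.trans_le (Submodule.finrank_mono hspan)
  have := LinearMap.finrank_range_add_finrank_ker (A - μ • 1).mulVecLin
  rw [Module.finrank_fintype_fun_eq_card] at this
  omega

end DistinctEigenvalues

theorem Fin.cons_zero_two_mul_sub_sum_injective {R : Type*} [Field R] [LinearOrder R]
    [IsStrictOrderedRing R] {n : ℕ} {a : Fin n → R} (ha : Function.Injective a)
    (hlt : ∀ k, 2 * a k < ∑ j, a j) :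
    Function.Injective (Fin.cons 0 fun k => 2 * a k - ∑ j, a j : Fin (n + 1) → R) := by
  refine Fin.cons_injective_iff.mpr ⟨?_, fun i j hij => ha ?_⟩
  · rintro ⟨k, hk⟩
    linarith [hlt k]
  · simpa using hij

def gellMann : Fin 8 → Matrix (Fin 3) (Fin 3) ℂ := ![gm1, gm2, gm3, gm4, gm5, gm6, gm7, gm8]

def gen3Coeff (a1 a2 a3 a4 a5 a6 : ℝ) : Fin 8 → ℝ :=
  ![a1, a2, a3, a4, a5, a6, a4 + a5 - a6, a1 + a2 + a3 - a4 - a5]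

def gen3Eigenvalue (a1 a2 a3 a4 a5 a6 : ℝ) : Fin 9 → ℝ :=
  Fin.cons 0 fun k => 2 * gen3Coeff a1 a2 a3 a4 a5 a6 k - ∑ j, gen3Coeff a1 a2 a3 a4 a5 a6 j

def gen3Eigenvector : Fin 9 → Matrix (Fin 3) (Fin 3) ℂ := Fin.cons 1 gellMann

lemma sum_gen3Coeff (a1 a2 a3 a4 a5 a6 : ℝ) :
    ∑ j, gen3Coeff a1 a2 a3 a4 a5 a6 j = 2 * (a1 + a2 + a3) + a4 + a5 := by
  simp only [Fin.sum_univ_eight, gen3Coeff, cons_val]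
  ring

lemma gm8_kronecker_gm8 :
    gm8 ⊗ₖ gm8 = (3 : ℂ)⁻¹ • (!![1, 0, 0; 0, 1, 0; 0, 0, -2] ⊗ₖ !![1, 0, 0; 0, 1, 0; 0, 0, -2]) := by
  rw [gm8, smul_kronecker, kronecker_smul, smul_smul, ← mul_inv, ← ofReal_mul,
    Real.mul_self_sqrt zero_le_three, ofReal_ofNat]

theorem gen3_mulVec_vec (a1 a2 a3 a4 a5 a6 : ℝ) (X : Matrix (Fin 3) (Fin 3) ℂ) :
    gen3 a1 a2 a3 a4 a5 a6 *ᵥ vec X = vec !![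
      (a1 + a2) * (X 1 1 - X 0 0) + (a4 + a5) * (X 2 2 - X 0 0),
      (a1 - a2) * X 1 0 - (a1 + a2 + 2 * a3 + a4 + a5) * X 0 1,
      (a4 - a5) * X 2 0 - 2 * (a1 + a2 + a3) * X 0 2;
      (a1 - a2) * X 0 1 - (a1 + a2 + 2 * a3 + a4 + a5) * X 1 0,
      (a1 + a2) * (X 0 0 - X 1 1) + (a4 + a5) * (X 2 2 - X 1 1),
      (2 * a6 - a4 - a5) * X 2 1 - 2 * (a1 + a2 + a3) * X 1 2;
      (a4 - a5) * X 0 2 - 2 * (a1 + a2 + a3) * X 2 0,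
      (2 * a6 - a4 - a5) * X 1 2 - 2 * (a1 + a2 + a3) * X 2 1,
      (a4 + a5) * (X 0 0 + X 1 1 - 2 * X 2 2)] := by
  rw [gen3, gm8_kronecker_gm8]
  ext ⟨i, j⟩
  fin_cases i <;> fin_cases j <;>
    simp [mulVec, dotProduct, Fintype.sum_prod_type, Fin.sum_univ_three, gm1, gm2, gm3, gm4, gm5,
      gm6, gm7] <;> ring

theorem gen3_mulVec_vec_eigenvector (a1 a2 a3 a4 a5 a6 : ℝ) (k : Fin 9) :
    gen3 a1 a2 a3 a4 a5 a6 *ᵥ vec (gen3Eigenvector k) =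
      (gen3Eigenvalue a1 a2 a3 a4 a5 a6 k : ℂ) • vec (gen3Eigenvector k) := by
  rw [gen3_mulVec_vec, ← vec_smul, gen3Eigenvalue, gen3Eigenvector]
  congr 1
  induction k using Fin.cases with
  | zero => ext i j; fin_cases i <;> fin_cases j <;> norm_num [one_apply, Fin.ext_iff]
  | succ k =>
    rw [Fin.cons_succ, Fin.cons_succ, sum_gen3Coeff]
    ext i j
    fin_cases k <;> fin_cases i <;> fin_cases j <;>
      simp [gellMann, gen3Coeff, gm1, gm2, gm3, gm4, gm5, gm6, gm7, gm8] <;> ring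

theorem gellMann_ne_zero (k : Fin 8) : gellMann k ≠ 0 := by
  intro h
  fin_cases k <;>
    simp [gellMann, gm1, gm2, gm3, gm4, gm5, gm6, gm7, gm8, ← Matrix.ext_iff, Fin.forall_fin_succ] at h

theorem vec_gen3Eigenvector_ne_zero (k : Fin 9) : vec (gen3Eigenvector k) ≠ 0 := by
  rw [Ne, vec_eq_zero_iff]
  induction k using Fin.cases with
  | zero => exact one_ne_zero
  | succ k => exact gellMann_ne_zero k

theorem two_mul_gen3Coeff_lt_sum {a1 a2 a3 a4 a5 a6 : ℝ} (h1 : 0 ≤ a1) (h2 : 0 ≤ a2) (h3 : 0 ≤ a3)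
    (h4 : 0 ≤ a4) (h5 : 0 ≤ a5) (h6 : 0 ≤ a6) (h7 : 0 ≤ a4 + a5 - a6)
    (h8 : 0 ≤ a1 + a2 + a3 - a4 - a5) (h45 : a4 ≠ a5) (k : Fin 8) :
    2 * gen3Coeff a1 a2 a3 a4 a5 a6 k < ∑ j, gen3Coeff a1 a2 a3 a4 a5 a6 j := by
  have hpos : 0 < a4 + a5 := by
    rcases h45.lt_or_gt with h | h <;> linarith
  rw [sum_gen3Coeff]
  fin_cases k <;> simp [gen3Coeff] <;> linarith

/-- under nonnegativity and pairwise distinctness of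
`a1, ..., a6, a7 = a4+a5−a6, a8 = a1+a2+a3−a4−a5`, the 9×9 generator `L₃` has nine
pairwise distinct eigenvalues; consequently every eigenspace (kernel of `L₃ − λ I₉`) has
dimension at most 1 (index of cyclicity 1), and the minimal polynomial of `L₃` equals
its characteristic polynomial. -/
theorem gen3_index_of_cyclicity_one (a1 a2 a3 a4 a5 a6 a7 a8 : ℝ)
    (h7 : a7 = a4 + a5 - a6) (h8 : a8 = a1 + a2 + a3 - a4 - a5)
    (h1 : 0 ≤ a1) (h2 : 0 ≤ a2) (h3 : 0 ≤ a3) (h4 : 0 ≤ a4)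
    (h5 : 0 ≤ a5) (h6 : 0 ≤ a6) (h7' : 0 ≤ a7) (h8' : 0 ≤ a8)
    (hdist : List.Pairwise (· ≠ ·) [a1, a2, a3, a4, a5, a6, a7, a8]) :
    (∃ α : Fin 9 → ℂ, Function.Injective α ∧
        (gen3 a1 a2 a3 a4 a5 a6).charpoly = ∏ i : Fin 9, (X - C (α i))) ∧
    (∀ lam : ℂ,
      Module.finrank ℂ
        (LinearMap.ker (gen3 a1 a2 a3 a4 a5 a6 - lam • 1).mulVecLin) ≤ 1) ∧
    minpoly ℂ (gen3 a1 a2 a3 a4 a5 a6) = (gen3 a1 a2 a3 a4 a5 a6).charpoly := by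
  subst h7 h8
  have hcoeff : Function.Injective (gen3Coeff a1 a2 a3 a4 a5 a6) :=
    List.nodup_ofFn.mp (by simpa [gen3Coeff] using hdist)
  have hd : Function.Injective fun k => (gen3Eigenvalue a1 a2 a3 a4 a5 a6 k : ℂ) :=
    ofReal_injective.comp <| Fin.cons_zero_two_mul_sub_sum_injective hcoeff <|
      two_mul_gen3Coeff_lt_sum h1 h2 h3 h4 h5 h6 h7' h8' (hcoeff.ne (by decide : (3 : Fin 8) ≠ 4))
  have hcard : Fintype.card (Fin 9) = Fintype.card (Fin 3 × Fin 3) := rfl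
  have hv := vec_gen3Eigenvector_ne_zero
  have hAv := gen3_mulVec_vec_eigenvector a1 a2 a3 a4 a5 a6
  exact ⟨⟨_, hd, charpoly_eq_prod_of_mulVec_eq_smul hd hv hAv hcard⟩,
    finrank_ker_sub_smul_le_one_of_mulVec_eq_smul hd hv hAv hcard,
    minpoly_eq_charpoly_of_mulVec_eq_smul hd hv hAv hcard⟩

end
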